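/- The class of all symmetric Kripke models (Kripke models whose accessibility relation ≺ is symmetric) has ULIP. -/

import Mathlib

/-- Modal formulas: propositional variables, ⊥, →, □. -/
inductive Formula : Type
  | var : ℕ → Formula
  | bot : Formula
  | imp : Formula → Formula → Formula
  | box : Formula → Formula
  deriving DecidableEq

namespace Formula

def neg (φ : Formula) : Formula := φ.imp bot

def top : Formula := neg bot

def and (φ ψ : Formula) : Formula := (φ.imp ψ.neg).neg

def iff (φ ψ : Formula) : Formula := (φ.imp ψ).and (ψ.imp φ)

def dia (φ : Formula) : Formula := φ.neg.box.neg

/-- Variables occurring positively (`true`) / negatively (`false`). -/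
def vsgn : Formula → Bool → Finset ℕ
  | var p, true => {p}
  | var _, false => ∅
  | bot, _ => ∅
  | imp φ ψ, b => vsgn φ (!b) ∪ vsgn ψ b
  | box φ, b => vsgn φ b

def vpos (φ : Formula) : Finset ℕ := vsgn φ true
def vneg (φ : Formula) : Finset ℕ := vsgn φ false
def vars (φ : Formula) : Finset ℕ := vpos φ ∪ vneg φ

/-- Modal depth. -/
def depth : Formula → ℕ
  | var _ => 0
  | bot => 0
  | imp φ ψ => max (depth φ) (depth ψ)
  | box φ => depth φ + 1

/-- Uniform substitution. -/
def subst (σ : ℕ → Formula) : Formula → Formula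
  | var p => σ p
  | bot => bot
  | imp φ ψ => (subst σ φ).imp (subst σ ψ)
  | box φ => (subst σ φ).box

/-- The set of subformulas. -/
def subfmls : Formula → Finset Formula
  | var p => {var p}
  | bot => {bot}
  | imp φ ψ => insert (imp φ ψ) (subfmls φ ∪ subfmls ψ)
  | box φ => insert (box φ) (subfmls φ)

/-- n(φ) = |{ψ : □ψ ∈ Sub(φ)}|. -/
def boxCount (φ : Formula) : ℕ :=
  ((subfmls φ).filter fun ψ => box ψ ∈ subfmls φ).card

/-- The translation ⋆ : p⋆ = p, ⊥⋆ = ⊥, (φ→ψ)⋆ = φ⋆→ψ⋆, (□φ)⋆ = φ⋆ ∧ □φ⋆. -/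
def star : Formula → Formula
  | var p => var p
  | bot => bot
  | imp φ ψ => (star φ).imp (star ψ)
  | box φ => (star φ).and (star φ).box

end Formula

/-- Propositional tautology: true under every valuation treating variables and
boxed formulas as atoms. -/
def Tautology (φ : Formula) : Prop :=
  ∀ v : Formula → Bool, v .bot = false →
    (∀ ψ θ : Formula, v (ψ.imp θ) = (!v ψ || v θ)) → v φ = true

/-- A normal modal logic: contains all tautologies and □(p→q)→(□p→□q), and is
closed under modus ponens, necessitation and uniform substitution. -/
structure IsNormal (L : Set Formula) : Prop where
  taut : ∀ φ, Tautology φ → φ ∈ L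
  axK : ((Formula.var 0).imp (Formula.var 1)).box.imp
      ((Formula.var 0).box.imp (Formula.var 1).box) ∈ L
  mp : ∀ φ ψ : Formula, φ.imp ψ ∈ L → φ ∈ L → ψ ∈ L
  nec : ∀ φ : Formula, φ ∈ L → φ.box ∈ L
  subst_mem : ∀ φ ∈ L, ∀ σ : ℕ → Formula, Formula.subst σ φ ∈ L

/-- The least normal modal logic including `X`. -/
def NormalExt (X : Set Formula) : Set Formula :=
  ⋂₀ {L : Set Formula | IsNormal L ∧ X ⊆ L}

/-- The least normal modal logic K. -/
def TheoryK : Set Formula := NormalExt ∅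

def axT : Formula := (Formula.var 0).box.imp (Formula.var 0)
def ax4 : Formula := (Formula.var 0).box.imp (Formula.var 0).box.box
def axB : Formula := (Formula.var 0).imp (Formula.var 0).dia.box
def axD : Formula := Formula.bot.box.neg
def axGL : Formula := ((Formula.var 0).box.imp (Formula.var 0)).box.imp (Formula.var 0).box
def axGrz : Formula :=
  (((Formula.var 0).imp (Formula.var 0).box).box.imp (Formula.var 0)).box.imp (Formula.var 0)

def TheoryKD : Set Formula := NormalExt {axD}
def TheoryKT : Set Formula := NormalExt {axT}
def TheoryKB : Set Formula := NormalExt {axB}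
def TheoryKDB : Set Formula := NormalExt {axD, axB}
def TheoryKTB : Set Formula := NormalExt {axT, axB}
def TheoryK4 : Set Formula := NormalExt {ax4}
def TheoryS4 : Set Formula := NormalExt {axT, ax4}
def TheoryGL : Set Formula := NormalExt {axGL}
def TheoryGrz : Set Formula := NormalExt {axGrz}

/-- L⋆ := {φ : L ⊢ φ⋆}. -/
def starLogic (L : Set Formula) : Set Formula := {φ | Formula.star φ ∈ L}

/-- θ is a uniform Lyndon interpolant of (φ, P, Q) in L. -/
def IsULInterpolant (L : Set Formula) (φ : Formula) (P Q : Finset ℕ) (θ : Formula) : Prop :=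
  θ.vpos ⊆ φ.vpos \ P ∧ θ.vneg ⊆ φ.vneg \ Q ∧ φ.imp θ ∈ L ∧
    ∀ ψ : Formula, ψ.vpos ∩ P = ∅ → ψ.vneg ∩ Q = ∅ → φ.imp ψ ∈ L → θ.imp ψ ∈ L

/-- The uniform Lyndon interpolation property. -/
def ULIP (L : Set Formula) : Prop :=
  ∀ (φ : Formula) (P Q : Finset ℕ), ∃ θ : Formula, IsULInterpolant L φ P Q θ

/-- The uniform interpolation property. -/
def UIP (L : Set Formula) : Prop :=
  ∀ (φ : Formula) (P : Finset ℕ), ∃ θ : Formula,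
    θ.vars ⊆ φ.vars \ P ∧ φ.imp θ ∈ L ∧
      ∀ ψ : Formula, ψ.vars ∩ P = ∅ → φ.imp ψ ∈ L → θ.imp ψ ∈ L

/-- The Lyndon interpolation property. -/
def LIP (L : Set Formula) : Prop :=
  ∀ φ ψ : Formula, φ.imp ψ ∈ L → ∃ θ : Formula,
    θ.vpos ⊆ φ.vpos ∩ ψ.vpos ∧ θ.vneg ⊆ φ.vneg ∩ ψ.vneg ∧
      φ.imp θ ∈ L ∧ θ.imp ψ ∈ L

/-- A Kripke model. -/
structure KripkeModel where
  W : Type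
  nonempty : Nonempty W
  rel : W → W → Prop
  val : W → ℕ → Prop

/-- Satisfaction in a Kripke model. -/
def KripkeModel.Sat (M : KripkeModel) : Formula → M.W → Prop
  | .var p, w => M.val w p
  | .bot, _ => False
  | .imp φ ψ, w => M.Sat φ w → M.Sat ψ w
  | .box φ, w => ∀ x, M.rel w x → M.Sat φ x

/-- A (P,Q)-formula: v⁺(φ) ⊆ P and v⁻(φ) ⊆ Q. -/
def PQFormula (P Q : Finset ℕ) (φ : Formula) : Prop := φ.vpos ⊆ P ∧ φ.vneg ⊆ Q

/-- `F n P Q` is a finite list of (P,Q)-formulas of modal depth ≤ n such that every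
(P,Q)-formula of modal depth ≤ n is K-provably equivalent to some member. -/
def IsFamily (F : ℕ → Finset ℕ → Finset ℕ → List Formula) : Prop :=
  ∀ (n : ℕ) (P Q : Finset ℕ),
    (∀ φ ∈ F n P Q, PQFormula P Q φ ∧ φ.depth ≤ n) ∧
    ∀ ψ : Formula, PQFormula P Q ψ → ψ.depth ≤ n →
      ∃ φ ∈ F n P Q, Formula.iff φ ψ ∈ TheoryK

/-- Th_n^{(P,Q)}(w) = {φ ∈ F_n^{(P,Q)} : w ⊩ φ}. -/
def Th (F : ℕ → Finset ℕ → Finset ℕ → List Formula) (M : KripkeModel)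
    (n : ℕ) (P Q : Finset ℕ) (w : M.W) : Set Formula :=
  {φ | φ ∈ F n P Q ∧ M.Sat φ w}

def conjList : List Formula → Formula
  | [] => Formula.top
  | φ :: l => φ.and (conjList l)

open Classical in
/-- C_n^{(P,Q)}(w) = ⋀ Th_n^{(P,Q)}(w). -/
noncomputable def Cfml (F : ℕ → Finset ℕ → Finset ℕ → List Formula) (M : KripkeModel)
    (n : ℕ) (P Q : Finset ℕ) (w : M.W) : Formula :=
  conjList ((F n P Q).filter fun φ => decide (M.Sat φ w))

/-- Layered (P,Q)-bisimulation between M and M'. -/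
def LayeredBisim (P Q : Finset ℕ) (M M' : KripkeModel)
    (Z : M.W → ℕ → M'.W → Prop) : Prop :=
  (∀ w n w', Z w n w' →
    (∀ p ∈ P, M.val w p → M'.val w' p) ∧ (∀ q ∈ Q, ¬M.val w q → ¬M'.val w' q)) ∧
  (∀ w n w', Z w (n + 1) w' → ∀ x, M.rel w x → ∃ x', M'.rel w' x' ∧ Z x n x') ∧
  (∀ w n w', Z w (n + 1) w' → ∀ x', M'.rel w' x' → ∃ x, M.rel w x ∧ Z x n x')

/-- Downward closedness of a layered bisimulation. -/
def DownClosed (M M' : KripkeModel) (Z : M.W → ℕ → M'.W → Prop) : Prop :=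
  ∀ w n w', Z w n w' → ∀ m ≤ n, Z w m w'

/-- A class of Kripke models has ULIP. -/
def ClassULIP (F : ℕ → Finset ℕ → Finset ℕ → List Formula) (Cl : Set KripkeModel) : Prop :=
  ∀ P1 P2 P3 Q1 Q2 Q3 : Finset ℕ,
    Disjoint P1 P2 → Disjoint P1 P3 → Disjoint P2 P3 →
    Disjoint Q1 Q2 → Disjoint Q1 Q3 → Disjoint Q2 Q3 →
    ∀ M : KripkeModel, M ∈ Cl → ∀ M' : KripkeModel, M' ∈ Cl →
    ∀ w : M.W, ∀ w' : M'.W, ∀ m n : ℕ,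
      Th F M n P2 Q2 w ⊆ Th F M' n P2 Q2 w' →
      ∃ Mst : KripkeModel, Mst ∈ Cl ∧ ∃ wst : Mst.W,
        Th F M n (P1 ∪ P2) (Q1 ∪ Q2) w ⊆ Th F Mst n (P1 ∪ P2) (Q1 ∪ Q2) wst ∧
        Th F Mst m (P2 ∪ P3) (Q2 ∪ Q3) wst ⊆ Th F M' m (P2 ∪ P3) (Q2 ∪ Q3) w'

/-!
Suppose `Th_n^{(P₂,Q₂)}(w) ⊆ Th_n^{(P₂,Q₂)}(w')`. Since each `F_k` is finite, such an inclusion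
at depth `k + 1` passes to successors: for `w ≺ x`, the formula `◇ C_k(x)` holds at `w`, hence at
`w'`, giving `w' ≺' x'` with the inclusion at depth `k` (and dually, via `¬`, backwards).
So take for `M*` the triples `(x, x', k)` with `Th_k^{(P₂,Q₂)}(x) ⊆ Th_k^{(P₂,Q₂)}(x')`, related when
both coordinates are related and the level moves by one in *either* direction, which keeps the
relation symmetric; a copy of `M'` is glued onto the triples of level `0`. Then `x ↦ (x, x', k)`
is a layered `(P₁ ∪ P₂, Q₁ ∪ Q₂)`-simulation from `M` to `M*` at `(w, w', n)`, and the second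
projection is a `(P₂ ∪ P₃, Q₂ ∪ Q₃)`-simulation from `M*` to `M'` at every depth.
-/

namespace KripkeModel

variable (M : KripkeModel) {φ ψ : Formula} {w : M.W}

@[simp] theorem sat_bot : ¬ M.Sat .bot w := id

@[simp] theorem sat_imp : M.Sat (φ.imp ψ) w ↔ (M.Sat φ w → M.Sat ψ w) := Iff.rfl

@[simp] theorem sat_box : M.Sat φ.box w ↔ ∀ x, M.rel w x → M.Sat φ x := Iff.rfl

@[simp] theorem sat_neg : M.Sat φ.neg w ↔ ¬ M.Sat φ w := Iff.rfl

@[simp] theorem sat_and : M.Sat (φ.and ψ) w ↔ M.Sat φ w ∧ M.Sat ψ w := by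
  simp [Formula.and]

@[simp] theorem sat_iff : M.Sat (φ.iff ψ) w ↔ (M.Sat φ w ↔ M.Sat ψ w) := by
  simp [Formula.iff, iff_def]

@[simp] theorem sat_dia : M.Sat φ.dia w ↔ ∃ x, M.rel w x ∧ M.Sat φ x := by
  simp [Formula.dia]

@[simp] theorem sat_conjList (l : List Formula) :
    M.Sat (conjList l) w ↔ ∀ φ ∈ l, M.Sat φ w := by
  induction l with
  | nil => simp [conjList, Formula.top]
  | cons φ l ih => simp [conjList, ih]

def subst (σ : ℕ → Formula) : KripkeModel :=
  ⟨M.W, M.nonempty, M.rel, fun w p => M.Sat (σ p) w⟩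

theorem sat_subst (σ : ℕ → Formula) (φ : Formula) (w : M.W) :
    M.Sat (φ.subst σ) w ↔ (M.subst σ).Sat φ w := by
  induction φ generalizing w with
  | var p => rfl
  | bot => rfl
  | imp φ ψ ihφ ihψ => exact imp_congr (ihφ w) (ihψ w)
  | box φ ih => exact forall₂_congr fun x _ => ih x

end KripkeModel

def Formula.IsValid (φ : Formula) : Prop := ∀ (M : KripkeModel) (w : M.W), M.Sat φ w

open Classical in
theorem isNormal_setOf_isValid : IsNormal {φ | φ.IsValid} where
  taut φ hφ M w := by
    simpa using hφ (fun ψ => decide (M.Sat ψ w)) (by simp) fun ψ θ => by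
      by_cases M.Sat ψ w <;> simp [*]
  axK M w := by simp +contextual
  mp _ _ hφψ hφ M w := hφψ M w (hφ M w)
  nec _ hφ M w x _ := hφ M x
  subst_mem φ hφ σ M w := (M.sat_subst σ φ w).2 (hφ (M.subst σ) w)

theorem Formula.IsValid.of_mem_theoryK {φ : Formula} (h : φ ∈ TheoryK) : φ.IsValid :=
  h _ ⟨isNormal_setOf_isValid, Set.empty_subset _⟩

section PQFormula

variable {P Q : Finset ℕ} {φ ψ : Formula}

@[simp] theorem pqFormula_var {p : ℕ} : PQFormula P Q (.var p) ↔ p ∈ P := by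
  simp [PQFormula, Formula.vpos, Formula.vneg, Formula.vsgn]

@[simp] theorem pqFormula_bot : PQFormula P Q .bot := by
  simp [PQFormula, Formula.vpos, Formula.vneg, Formula.vsgn]

@[simp] theorem pqFormula_imp :
    PQFormula P Q (φ.imp ψ) ↔ PQFormula Q P φ ∧ PQFormula P Q ψ := by
  simp only [PQFormula, Formula.vpos, Formula.vneg, Formula.vsgn, Bool.not_true,
    Bool.not_false, Finset.union_subset_iff]
  tauto

@[simp] theorem pqFormula_box : PQFormula P Q φ.box ↔ PQFormula P Q φ := Iff.rfl

@[simp] theorem pqFormula_neg : PQFormula P Q φ.neg ↔ PQFormula Q P φ := by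
  simp [Formula.neg]

@[simp] theorem pqFormula_and :
    PQFormula P Q (φ.and ψ) ↔ PQFormula P Q φ ∧ PQFormula P Q ψ := by
  simp [Formula.and]

@[simp] theorem pqFormula_dia : PQFormula P Q φ.dia ↔ PQFormula P Q φ := by
  simp [Formula.dia]

theorem pqFormula_conjList {l : List Formula} (h : ∀ φ ∈ l, PQFormula P Q φ) :
    PQFormula P Q (conjList l) := by
  induction l with
  | nil => simp [conjList, Formula.top]
  | cons φ l ih => simp_all [conjList]

end PQFormula

section Depth

variable {φ ψ : Formula}

@[simp] theorem Formula.depth_neg : φ.neg.depth = φ.depth := by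
  simp [Formula.neg, Formula.depth]

@[simp] theorem Formula.depth_and : (φ.and ψ).depth = max φ.depth ψ.depth := by
  simp [Formula.and, Formula.depth]

@[simp] theorem Formula.depth_dia : φ.dia.depth = φ.depth + 1 := by
  simp [Formula.dia, Formula.depth]

theorem depth_conjList_le {n : ℕ} {l : List Formula} (h : ∀ φ ∈ l, φ.depth ≤ n) :
    (conjList l).depth ≤ n := by
  induction l with
  | nil => simp [conjList, Formula.top, Formula.depth]
  | cons φ l ih => simp_all [conjList]

end Depth

/-- `Th_n^{(P,Q)}(w) ⊆ Th_n^{(P,Q)}(w')`, read over all formulas rather than over a family. -/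
def ThSubset (P Q : Finset ℕ) (n : ℕ) {M M' : KripkeModel} (w : M.W) (w' : M'.W) : Prop :=
  ∀ φ, PQFormula P Q φ → φ.depth ≤ n → M.Sat φ w → M'.Sat φ w'

namespace ThSubset

variable {P Q : Finset ℕ} {n : ℕ} {M M' : KripkeModel} {w : M.W} {w' : M'.W}

theorem symm (h : ThSubset P Q n w w') : ThSubset Q P n w' w := fun φ hφ hd hw' => by
  by_contra hw
  exact (h φ.neg (by simpa using hφ) (by simpa using hd) hw) hw'

theorem val {p : ℕ} (h : ThSubset P Q n w w') (hp : p ∈ P) (hw : M.val w p) :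
    M'.val w' p :=
  h (.var p) (by simpa using hp) (Nat.zero_le n) hw

end ThSubset

section Family

variable {F : ℕ → Finset ℕ → Finset ℕ → List Formula} {P Q : Finset ℕ} {n : ℕ}
  {M M' : KripkeModel}

theorem sat_cfml_iff {w : M.W} {w' : M'.W} :
    M'.Sat (Cfml F M n P Q w) w' ↔ Th F M n P Q w ⊆ Th F M' n P Q w' := by
  simp +contextual [Cfml, Th, Set.subset_def]

theorem IsFamily.pqFormula_cfml (hF : IsFamily F) (w : M.W) :
    PQFormula P Q (Cfml F M n P Q w) :=
  pqFormula_conjList fun φ hφ => ((hF n P Q).1 φ (List.mem_of_mem_filter hφ)).1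

theorem IsFamily.depth_cfml_le (hF : IsFamily F) (w : M.W) :
    (Cfml F M n P Q w).depth ≤ n :=
  depth_conjList_le fun φ hφ => ((hF n P Q).1 φ (List.mem_of_mem_filter hφ)).2

theorem IsFamily.th_subset_th_iff (hF : IsFamily F) {w : M.W} {w' : M'.W} :
    Th F M n P Q w ⊆ Th F M' n P Q w' ↔ ThSubset P Q n w w' := by
  constructor
  · intro h ψ hψ hd hw
    obtain ⟨φ, hφF, hφψ⟩ := (hF n P Q).2 ψ hψ hd
    have hequiv := Formula.IsValid.of_mem_theoryK hφψ
    rw [← (M'.sat_iff).1 (hequiv M' w')]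
    exact (h ⟨hφF, (M.sat_iff).1 (hequiv M w) |>.2 hw⟩).2
  · rintro h φ ⟨hφF, hw⟩
    obtain ⟨hφ, hd⟩ := (hF n P Q).1 φ hφF
    exact ⟨hφF, h φ hφ hd hw⟩

theorem ThSubset.forth (hF : IsFamily F) {w x : M.W} {w' : M'.W}
    (h : ThSubset P Q (n + 1) w w') (hx : M.rel w x) :
    ∃ x', M'.rel w' x' ∧ ThSubset P Q n x x' := by
  have hdia : M'.Sat (Cfml F M n P Q x).dia w' :=
    h _ (by simpa using hF.pqFormula_cfml x) (by simpa using hF.depth_cfml_le x)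
      ((M.sat_dia).2 ⟨x, hx, sat_cfml_iff.2 subset_rfl⟩)
  obtain ⟨x', hx', hC⟩ := (M'.sat_dia).1 hdia
  exact ⟨x', hx', hF.th_subset_th_iff.1 (sat_cfml_iff.1 hC)⟩

theorem ThSubset.back (hF : IsFamily F) {w : M.W} {w' x' : M'.W}
    (h : ThSubset P Q (n + 1) w w') (hx' : M'.rel w' x') :
    ∃ x, M.rel w x ∧ ThSubset P Q n x x' :=
  let ⟨x, hx, h'⟩ := h.symm.forth hF hx'
  ⟨x, hx, h'.symm⟩

end Family

namespace LayeredBisim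

variable {P Q : Finset ℕ} {M M' : KripkeModel} {Z : M.W → ℕ → M'.W → Prop}

theorem symm (h : LayeredBisim P Q M M' Z) :
    LayeredBisim Q P M' M (fun w' n w => Z w n w') := by
  obtain ⟨hval, hforth, hback⟩ := h
  refine ⟨fun w' n w hZ => ⟨fun p hp hw' => ?_, fun q hq hw' hw => ?_⟩,
    fun w' n w hZ x' hx' => hback w n w' hZ x' hx', fun w' n w hZ x hx => hforth w n w' hZ x hx⟩
  · by_contra hw
    exact (hval w n w' hZ).2 p hp hw hw'
  · exact hw' ((hval w n w' hZ).1 q hq hw)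

theorem sat {φ : Formula} (h : LayeredBisim P Q M M' Z) (hφ : PQFormula P Q φ) {n : ℕ}
    (hd : φ.depth ≤ n) {w : M.W} {w' : M'.W} (hZ : Z w n w') (hw : M.Sat φ w) :
    M'.Sat φ w' := by
  induction φ generalizing P Q M M' n w w' with
  | var p => exact (h.1 w n w' hZ).1 p (by simpa using hφ) hw
  | bot => exact hw.elim
  | imp φ ψ ihφ ihψ =>
    simp only [pqFormula_imp, Formula.depth, max_le_iff] at hφ hd
    exact fun hφw' => ihψ h hφ.2 hd.2 hZ (hw (ihφ h.symm hφ.1 hd.1 hZ hφw'))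
  | box φ ih =>
    obtain ⟨n, rfl⟩ : ∃ k, n = k + 1 := ⟨n - 1, by simp only [Formula.depth] at hd; omega⟩
    intro x' hx'
    obtain ⟨x, hx, hZx⟩ := h.2.2 w n w' hZ x' hx'
    exact ih h hφ (Nat.le_of_succ_le_succ hd) hZx (hw x hx)

theorem thSubset (h : LayeredBisim P Q M M' Z) {n : ℕ} {w : M.W} {w' : M'.W}
    (hZ : Z w n w') : ThSubset P Q n w w' :=
  fun _ hφ hd => h.sat hφ hd hZ

end LayeredBisim

structure WitnessTriple (P Q : Finset ℕ) (M M' : KripkeModel) where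
  left : M.W
  right : M'.W
  level : ℕ
  thSubset : ThSubset P Q level left right

section Witness

variable (P2 P3 Q2 Q3 : Finset ℕ) (M M' : KripkeModel)

def witnessModel : KripkeModel where
  W := WitnessTriple P2 Q2 M M' ⊕ M'.W
  nonempty := ⟨.inr M'.nonempty.some⟩
  rel s t := M'.rel (s.elim WitnessTriple.right id) (t.elim WitnessTriple.right id) ∧
    match s, t with
    | .inl s, .inl t => M.rel s.left t.left ∧ (s.level = t.level + 1 ∨ t.level = s.level + 1)
    | .inl s, .inr _ => s.level = 0
    | .inr _, .inl t => t.level = 0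
    | .inr _, .inr _ => True
  -- `M`'s atoms outside `P3` serve the first simulation, `M'`'s atoms in `Q2 ∪ Q3` the second
  val
    | .inl s, p => (M.val s.left p ∧ p ∉ P3) ∨ (M'.val s.right p ∧ p ∈ Q2 ∪ Q3)
    | .inr y', p => M'.val y' p

def witnessLeftSim : M.W → ℕ → (witnessModel P2 P3 Q2 Q3 M M').W → Prop
  | u, l, .inl s => s.left = u ∧ l ≤ s.level
  | _, _, .inr _ => False

variable {P2 P3 Q2 Q3 M M'}

theorem witnessModel_symmetric (hM : Symmetric M.rel) (hM' : Symmetric M'.rel) :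
    Symmetric (witnessModel P2 P3 Q2 Q3 M M').rel := by
  rintro (s | y') (t | z') ⟨h', h⟩
  · exact ⟨hM' h', hM h.1, h.2.symm⟩
  · exact ⟨hM' h', h⟩
  · exact ⟨hM' h', h⟩
  · exact ⟨hM' h', h⟩

theorem layeredBisim_witnessLeftSim {F : ℕ → Finset ℕ → Finset ℕ → List Formula}
    (hF : IsFamily F) {P1 Q1 : Finset ℕ} (hP13 : Disjoint P1 P3) (hP23 : Disjoint P2 P3)
    (hQ12 : Disjoint Q1 Q2) (hQ13 : Disjoint Q1 Q3) :
    LayeredBisim (P1 ∪ P2) (Q1 ∪ Q2) M (witnessModel P2 P3 Q2 Q3 M M')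
      (witnessLeftSim P2 P3 Q2 Q3 M M') := by
  refine ⟨?_, ?_, ?_⟩
  · rintro u l (s | _) ⟨rfl, -⟩
    refine ⟨fun p hp hu => .inl ⟨hu, ?_⟩, ?_⟩
    · exact Finset.disjoint_left.1 (Finset.disjoint_union_left.2 ⟨hP13, hP23⟩) hp
    · rintro q hq hu (⟨hu', -⟩ | ⟨hs, hq'⟩)
      · exact hu hu'
      · have hq2 : q ∈ Q2 := (Finset.mem_union.1 hq).resolve_left fun hq1 =>
          Finset.disjoint_left.1 (Finset.disjoint_union_right.2 ⟨hQ12, hQ13⟩) hq1 hq'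
        exact hu (s.thSubset.symm.val hq2 hs)
  · rintro u l (⟨x, x', k, hs⟩ | _) ⟨rfl, hl⟩ z hz
    obtain ⟨k, rfl⟩ : ∃ k', k = k' + 1 := ⟨k - 1, by dsimp only at hl; omega⟩
    obtain ⟨z', hz', hzz'⟩ := hs.forth hF hz
    exact ⟨.inl ⟨z, z', k, hzz'⟩, ⟨hz', hz, .inl rfl⟩, rfl, Nat.le_of_succ_le_succ hl⟩
  · rintro u l (s | _) ⟨rfl, hl⟩ (t | _) ⟨-, ht⟩
    · exact ⟨t.left, ht.1, rfl, by omega⟩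
    · exact absurd ht (by omega)

theorem layeredBisim_witnessProj {F : ℕ → Finset ℕ → Finset ℕ → List Formula}
    (hF : IsFamily F) :
    LayeredBisim (P2 ∪ P3) (Q2 ∪ Q3) (witnessModel P2 P3 Q2 Q3 M M') M'
      (fun s _ y' => s.elim WitnessTriple.right id = y') := by
  refine ⟨?_, fun s l y' hs t hst => ⟨_, hs ▸ hst.1, rfl⟩, ?_⟩
  · rintro (s | y') l _ rfl
    · refine ⟨?_, fun q hq hs hs' => hs (.inr ⟨hs', hq⟩)⟩
      rintro p hp (⟨hs, hp3⟩ | ⟨hs', -⟩)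
      · exact s.thSubset.val ((Finset.mem_union.1 hp).resolve_right hp3) hs
      · exact hs'
    · exact ⟨fun _ _ => id, fun _ _ => id⟩
  · rintro (⟨x, x', k, hs⟩ | y') l _ rfl z' hz'
    · cases k with
      | zero => exact ⟨.inr z', ⟨hz', rfl⟩, rfl⟩
      | succ k =>
        obtain ⟨z, hz, hzz'⟩ := hs.back hF hz'
        exact ⟨.inl ⟨z, z', k, hzz'⟩, ⟨hz', hz, .inl rfl⟩, rfl⟩
    · exact ⟨.inr z', ⟨hz', trivial⟩, rfl⟩

end Witness

/-- The class of all symmetric Kripke models has ULIP. -/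
theorem classULIP_symmetric (F : ℕ → Finset ℕ → Finset ℕ → List Formula) (hF : IsFamily F) :
    ClassULIP F {M : KripkeModel | Symmetric M.rel} := by
  intro P1 P2 P3 Q1 Q2 Q3 _ hP13 hP23 hQ12 hQ13 _ M hM M' hM' w w' m n hTh
  let wst : (witnessModel P2 P3 Q2 Q3 M M').W := .inl ⟨w, w', n, hF.th_subset_th_iff.1 hTh⟩
  refine ⟨witnessModel P2 P3 Q2 Q3 M M', witnessModel_symmetric hM hM', wst, ?_, ?_⟩
  · exact hF.th_subset_th_iff.2 <|
      (layeredBisim_witnessLeftSim hF hP13 hP23 hQ12 hQ13).thSubset (w' := wst) ⟨rfl, le_rfl⟩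
  · exact hF.th_subset_th_iff.2 <| (layeredBisim_witnessProj hF).thSubset (w := wst) rfl
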